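/- Let u be a positive continuous function on [0,∞) with lim_{r→∞} log u(r)/√r = ∞, and suppose u is (log, x²)-convex (x ↦ log u(x²) is convex on [0,∞)). Then the Legendre transform of the dual Legendre transform u*(r) = sup_{s≥0} e^{2√(rs)}/u(s) is given by ℓ_{u*}(t) = e^{2t}/(ℓ_u(t) t^{2t}) for all t ≥ 0 (with the convention t^{2t} = 1 at t = 0). -/

import Mathlib

/-!
The inequality `≥` comes from `e^{2t} (rs)^t ≤ t^{2t} e^{2√(rs)} ≤ t^{2t} u*(r) u(s)`.
For `t > 0` the infimum `ℓ_u(t)` is attained at some `r₀ > 0`, so `x ↦ log u(x²) - 2t log x` is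
minimal at `x₀ = √r₀`; convexity then makes `2t/x₀` a subgradient of `x ↦ log u(x²)` at `x₀`,
which gives `u*(t²/r₀) ≤ e^{2t}/u(r₀)`, i.e. `ℓ_{u*}(t) ≤ e^{2t}/(ℓ_u(t) t^{2t})`.
For `t = 0`, `θ ↦ log u*(θ²)` is convex as a supremum of affine functions, so
`u*(θ²) ≤ u*(0)^{1-θ} u*(1)^θ → u*(0) = 1/ℓ_u(0)` as `θ → 0`.
-/

noncomputable def ell (u : ℝ → ℝ) (t : ℝ) : ℝ :=
  ⨅ r : {r : ℝ // 0 < r}, u r / (r : ℝ) ^ t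

noncomputable def dualL (u : ℝ → ℝ) (r : ℝ) : ℝ :=
  ⨆ s : {s : ℝ // 0 ≤ s}, Real.exp (2 * Real.sqrt (r * s)) / u s

open Real Filter Set Topology

theorem le_ell {u : ℝ → ℝ} {t b : ℝ} (h : ∀ r > 0, b ≤ u r / r ^ t) : b ≤ ell u t :=
  haveI : Nonempty {r : ℝ // 0 < r} := ⟨⟨1, one_pos⟩⟩
  le_ciInf fun r => h r r.2

theorem ell_le {u : ℝ → ℝ} {t r : ℝ} (hu : ∀ s > 0, 0 ≤ u s) (hr : 0 < r) :
    ell u t ≤ u r / r ^ t :=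
  ciInf_le ⟨0, by rintro _ ⟨s, rfl⟩; exact div_nonneg (hu s s.2) (rpow_nonneg s.2.le t)⟩
    (⟨r, hr⟩ : {r : ℝ // 0 < r})

theorem dualL_le {u : ℝ → ℝ} {r B : ℝ} (h : ∀ s ≥ 0, exp (2 * √(r * s)) / u s ≤ B) :
    dualL u r ≤ B :=
  haveI : Nonempty {s : ℝ // 0 ≤ s} := ⟨⟨0, le_rfl⟩⟩
  ciSup_le fun s => h s s.2

theorem self_rpow_two_mul_pos {t : ℝ} (ht : 0 ≤ t) : 0 < t ^ (2 * t) := by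
  rcases ht.eq_or_lt with rfl | ht
  · simp
  · exact rpow_pos_of_pos ht _

/-- The function `q ↦ q^{2t} e^{-2q}` is maximal at `q = t`. -/
theorem exp_mul_rpow_le_exp_mul_rpow {t q : ℝ} (ht : 0 ≤ t) (hq : 0 ≤ q) :
    exp (2 * t) * q ^ (2 * t) ≤ exp (2 * q) * t ^ (2 * t) := by
  rcases ht.eq_or_lt with rfl | ht
  · simpa using one_le_exp (by positivity : 0 ≤ 2 * q)
  have hq' : q / t ≤ exp (q / t - 1) := by linarith [add_one_le_exp (q / t - 1)]
  have hpow := rpow_le_rpow (by positivity) hq' (by positivity : 0 ≤ 2 * t)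
  rw [div_rpow hq ht.le, ← exp_mul, div_le_iff₀ (by positivity)] at hpow
  calc exp (2 * t) * q ^ (2 * t)
      ≤ exp (2 * t) * (exp ((q / t - 1) * (2 * t)) * t ^ (2 * t)) := by gcongr
    _ = exp (2 * q) * t ^ (2 * t) := by
      rw [← mul_assoc, ← exp_add]
      congr 2
      field_simp
      ring

theorem ContinuousOn.bddAbove_image_Ici {f : ℝ → ℝ} {a C : ℝ} (hf : ContinuousOn f (Ici a))
    (h : ∀ᶠ x in atTop, f x ≤ C) : BddAbove (f '' Ici a) := by
  obtain ⟨S, hS⟩ := eventually_atTop.1 h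
  have hsplit : Ici a ⊆ Icc a (max a S) ∪ Ici S := fun x hx => by
    rcases le_total x S with hxS | hxS
    · exact .inl ⟨hx, hxS.trans (le_max_right _ _)⟩
    · exact .inr hxS
  refine ((isCompact_Icc.bddAbove_image (hf.mono Icc_subset_Ici_self)).union ⟨C, ?_⟩).mono
    ((image_mono hsplit).trans (image_union _ _ _).subset)
  rintro _ ⟨x, hx, rfl⟩
  exact hS x hx

theorem exists_isMinOn_Ioi_of_tendsto {f : ℝ → ℝ} (hf : ContinuousOn f (Ioi 0))
    (h0 : Tendsto f (𝓝[>] 0) atTop) (hinf : Tendsto f atTop atTop) :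
    ∃ x₀ > 0, IsMinOn f (Ioi 0) x₀ := by
  have hcont : Continuous (f ∘ exp) := hf.comp_continuous continuous_exp exp_pos
  have htend : Tendsto (f ∘ exp) (cocompact ℝ) atTop := by
    rw [cocompact_eq_atBot_atTop]
    exact (h0.comp tendsto_exp_atBot_nhdsGT).sup (hinf.comp tendsto_exp_atTop)
  obtain ⟨y₀, hy₀⟩ := hcont.exists_forall_le htend
  refine ⟨exp y₀, exp_pos y₀, fun x hx => ?_⟩
  simpa [exp_log (mem_Ioi.1 hx)] using hy₀ (log x)

theorem ConvexOn.add_mul_sub_le_of_isLocalMinOn_sub {s : Set ℝ} {g φ : ℝ → ℝ} {φ' x₀ x : ℝ}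
    (hg : ConvexOn ℝ s g) (hx₀ : x₀ ∈ s) (hx : x ∈ s) (hφ : HasDerivAt φ φ' x₀)
    (hmin : IsLocalMinOn (fun z => g z - φ z) s x₀) : g x₀ + φ' * (x - x₀) ≤ g x := by
  set z : ℝ → ℝ := fun θ => x₀ + θ * (x - x₀) with hz
  have hz0 : z 0 = x₀ := by simp [hz]
  have hz_eq (θ : ℝ) : z θ = (1 - θ) • x₀ + θ • x := by simp only [hz, smul_eq_mul]; ring
  have hzs : ∀ θ ∈ Ioo (0 : ℝ) 1, z θ ∈ s := fun θ hθ =>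
    hz_eq θ ▸ hg.1 hx₀ hx (by linarith [hθ.2]) hθ.1.le (by ring)
  have hderiv : HasDerivAt (φ ∘ z) (φ' * (x - x₀)) 0 := by
    have hz' : HasDerivAt z (x - x₀) 0 := by
      simpa only [one_mul] using ((hasDerivAt_id' 0).mul_const (x - x₀)).const_add x₀
    exact (hz0 ▸ hφ).comp 0 hz'
  have hslope : Tendsto (slope (φ ∘ z) 0) (𝓝[>] 0) (𝓝 (φ' * (x - x₀))) :=
    (hasDerivAt_iff_tendsto_slope.1 hderiv).mono_left (nhdsWithin_mono _ fun θ hθ => ne_of_gt hθ)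
  have hzlim : Tendsto z (𝓝[>] 0) (𝓝[s] x₀) := by
    refine tendsto_nhdsWithin_iff.2 ⟨?_, ?_⟩
    · exact hz0 ▸ ((by fun_prop : Continuous z).tendsto 0).mono_left nhdsWithin_le_nhds
    · filter_upwards [Ioo_mem_nhdsGT one_pos] using hzs
  suffices φ' * (x - x₀) ≤ g x - g x₀ by linarith
  refine le_of_tendsto hslope ?_
  filter_upwards [Ioo_mem_nhdsGT one_pos, hzlim.eventually hmin] with θ hθ hθmin
  have hconv : g (z θ) ≤ (1 - θ) * g x₀ + θ * g x :=
    hz_eq θ ▸ hg.2 hx₀ hx (by linarith [hθ.2]) hθ.1.le (by ring)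
  simp only [slope_def_field, sub_zero, Function.comp_apply, hz0] at hθmin ⊢
  rw [div_le_iff₀ hθ.1]
  linarith

section

variable {u : ℝ → ℝ}

theorem eventually_exp_mul_sqrt_le (hpos : ∀ r ≥ 0, 0 < u r)
    (hlim : Tendsto (fun r => log (u r) / √r) atTop atTop) (K : ℝ) :
    ∀ᶠ s in atTop, exp (K * √s) ≤ u s := by
  filter_upwards [hlim.eventually_ge_atTop K, eventually_gt_atTop 0] with s hK hs
  rw [le_div_iff₀ (sqrt_pos.2 hs)] at hK
  exact (exp_le_exp.2 hK).trans_eq (exp_log (hpos s hs.le))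

theorem tendsto_div_rpow_atTop (hpos : ∀ r ≥ 0, 0 < u r)
    (hlim : Tendsto (fun r => log (u r) / √r) atTop atTop) (t : ℝ) :
    Tendsto (fun r => u r / r ^ t) atTop atTop := by
  refine tendsto_atTop_mono' _ ?_ (tendsto_exp_atTop.comp tendsto_sqrt_atTop)
  filter_upwards [eventually_exp_mul_sqrt_le hpos hlim (2 * |t| + 1), eventually_ge_atTop 1]
    with r hu hr
  have hr0 : 0 < r := by linarith
  have hlog : log r ≤ 2 * √r := by
    have := log_le_rpow_div hr0.le one_half_pos
    rwa [← sqrt_eq_rpow, div_eq_mul_inv, one_div, inv_inv, mul_comm] at this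
  have hrt : r ^ t ≤ exp (2 * |t| * √r) := by
    rw [rpow_def_of_pos hr0]
    exact exp_le_exp.2 (by nlinarith [le_abs_self t, log_nonneg hr, abs_nonneg t])
  rw [Function.comp_apply, le_div_iff₀ (rpow_pos_of_pos hr0 t)]
  calc exp √r * r ^ t ≤ exp √r * exp (2 * |t| * √r) := by gcongr
    _ = exp ((2 * |t| + 1) * √r) := by rw [← exp_add]; ring_nf
    _ ≤ u r := hu

theorem exists_isMinOn_div_rpow (hpos : ∀ r ≥ 0, 0 < u r) (hcont : ContinuousOn u (Ici 0))
    (hlim : Tendsto (fun r => log (u r) / √r) atTop atTop) {t : ℝ} (ht : 0 < t) :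
    ∃ r₀ > 0, IsMinOn (fun r => u r / r ^ t) (Ioi 0) r₀ := by
  refine exists_isMinOn_Ioi_of_tendsto ?_ ?_ (tendsto_div_rpow_atTop hpos hlim t)
  · exact (hcont.mono Ioi_subset_Ici_self).div
      (continuousOn_id.rpow_const fun r hr => .inl (ne_of_gt hr))
      fun r hr => (rpow_pos_of_pos hr t).ne'
  · have hu0 : Tendsto u (𝓝[>] 0) (𝓝 (u 0)) :=
      (hcont 0 self_mem_Ici).tendsto.mono_left (nhdsWithin_mono _ Ioi_subset_Ici_self)
    refine (hu0.pos_mul_atTop (hpos 0 le_rfl) (tendsto_rpow_neg_nhdsGT_zero (neg_neg_of_pos ht))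
      ).congr' ?_
    filter_upwards [self_mem_nhdsWithin] with r hr
    rw [rpow_neg (le_of_lt hr), div_eq_mul_inv]

theorem bddAbove_range_dualL (hpos : ∀ r ≥ 0, 0 < u r) (hcont : ContinuousOn u (Ici 0))
    (hlim : Tendsto (fun r => log (u r) / √r) atTop atTop) {r : ℝ} (hr : 0 ≤ r) :
    BddAbove (range fun s : {s : ℝ // 0 ≤ s} => exp (2 * √(r * s)) / u s) := by
  have hf : ContinuousOn (fun s => exp (2 * √(r * s)) / u s) (Ici 0) :=
    ContinuousOn.div (by fun_prop) hcont fun s hs => (hpos s hs).ne'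
  have htail : ∀ᶠ s in atTop, exp (2 * √(r * s)) / u s ≤ 1 := by
    filter_upwards [eventually_exp_mul_sqrt_le hpos hlim (2 * √r), eventually_ge_atTop 0]
      with s hs hs0
    rwa [div_le_one (hpos s hs0), sqrt_mul hr, ← mul_assoc]
  have := hf.bddAbove_image_Ici htail
  rwa [image_eq_range] at this

theorem le_dualL (hpos : ∀ r ≥ 0, 0 < u r) (hcont : ContinuousOn u (Ici 0))
    (hlim : Tendsto (fun r => log (u r) / √r) atTop atTop) {r s : ℝ} (hr : 0 ≤ r) (hs : 0 ≤ s) :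
    exp (2 * √(r * s)) / u s ≤ dualL u r :=
  le_ciSup (bddAbove_range_dualL hpos hcont hlim hr) (⟨s, hs⟩ : {s : ℝ // 0 ≤ s})

theorem dualL_pos (hpos : ∀ r ≥ 0, 0 < u r) (hcont : ContinuousOn u (Ici 0))
    (hlim : Tendsto (fun r => log (u r) / √r) atTop atTop) {r : ℝ} (hr : 0 ≤ r) :
    0 < dualL u r :=
  (div_pos (exp_pos _) (hpos 0 le_rfl)).trans_le (le_dualL hpos hcont hlim hr le_rfl)


theorem exp_mul_rpow_mul_rpow_le (hpos : ∀ r ≥ 0, 0 < u r) (hcont : ContinuousOn u (Ici 0))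
    (hlim : Tendsto (fun r => log (u r) / √r) atTop atTop) {t r s : ℝ} (ht : 0 ≤ t)
    (hr : 0 ≤ r) (hs : 0 ≤ s) :
    exp (2 * t) * (r ^ t * s ^ t) ≤ t ^ (2 * t) * (dualL u r * u s) := by
  have hsqrt : √(r * s) ^ (2 * t) = r ^ t * s ^ t := by
    rw [sqrt_eq_rpow, ← rpow_mul (by positivity), one_div, inv_mul_cancel_left₀ two_ne_zero,
      mul_rpow hr hs]
  have hdual : exp (2 * √(r * s)) ≤ dualL u r * u s :=
    (div_le_iff₀ (hpos s hs)).1 (le_dualL hpos hcont hlim hr hs)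
  calc exp (2 * t) * (r ^ t * s ^ t) = exp (2 * t) * √(r * s) ^ (2 * t) := by rw [hsqrt]
    _ ≤ exp (2 * √(r * s)) * t ^ (2 * t) := exp_mul_rpow_le_exp_mul_rpow ht (sqrt_nonneg _)
    _ ≤ dualL u r * u s * t ^ (2 * t) := by gcongr
    _ = t ^ (2 * t) * (dualL u r * u s) := mul_comm _ _

theorem exp_mul_rpow_div_le_ell (hpos : ∀ r ≥ 0, 0 < u r) (hcont : ContinuousOn u (Ici 0))
    (hlim : Tendsto (fun r => log (u r) / √r) atTop atTop) {t r : ℝ} (ht : 0 ≤ t) (hr : 0 ≤ r) :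
    exp (2 * t) * r ^ t / (t ^ (2 * t) * dualL u r) ≤ ell u t := by
  have := self_rpow_two_mul_pos ht
  have := dualL_pos hpos hcont hlim hr
  refine le_ell fun s hs => ?_
  rw [div_le_div_iff₀ (by positivity) (rpow_pos_of_pos hs t)]
  linarith [exp_mul_rpow_mul_rpow_le hpos hcont hlim ht hr hs.le]

theorem ell_pos (hpos : ∀ r ≥ 0, 0 < u r) (hcont : ContinuousOn u (Ici 0))
    (hlim : Tendsto (fun r => log (u r) / √r) atTop atTop) {t : ℝ} (ht : 0 ≤ t) :
    0 < ell u t := by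
  have := self_rpow_two_mul_pos ht
  have := dualL_pos hpos hcont hlim zero_le_one
  exact lt_of_lt_of_le (by positivity) (exp_mul_rpow_div_le_ell hpos hcont hlim ht zero_le_one)

theorem div_ell_le_ell_dualL (hpos : ∀ r ≥ 0, 0 < u r) (hcont : ContinuousOn u (Ici 0))
    (hlim : Tendsto (fun r => log (u r) / √r) atTop atTop) {t : ℝ} (ht : 0 ≤ t) :
    exp (2 * t) / (ell u t * t ^ (2 * t)) ≤ ell (dualL u) t := by
  have := self_rpow_two_mul_pos ht
  have := ell_pos hpos hcont hlim ht
  refine le_ell fun r hr => ?_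
  have := dualL_pos hpos hcont hlim hr.le
  have key := exp_mul_rpow_div_le_ell hpos hcont hlim ht hr.le
  rw [div_le_iff₀ (by positivity)] at key
  rw [div_le_div_iff₀ (by positivity) (rpow_pos_of_pos hr t)]
  linarith

theorem ell_zero_le (hpos : ∀ r ≥ 0, 0 < u r) (hcont : ContinuousOn u (Ici 0)) {s : ℝ}
    (hs : 0 ≤ s) : ell u 0 ≤ u s := by
  have hle : ∀ r > 0, ell u 0 ≤ u r := fun r hr => by
    simpa using ell_le (t := 0) (fun r hr => (hpos r hr.le).le) hr
  rcases hs.eq_or_lt with rfl | hs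
  · exact ge_of_tendsto ((hcont 0 self_mem_Ici).tendsto.mono_left
      (nhdsWithin_mono _ Ioi_subset_Ici_self)) (eventually_nhdsWithin_of_forall hle)
  · exact hle s hs

theorem dualL_zero_le (hpos : ∀ r ≥ 0, 0 < u r) (hcont : ContinuousOn u (Ici 0))
    (hlim : Tendsto (fun r => log (u r) / √r) atTop atTop) : dualL u 0 ≤ (ell u 0)⁻¹ :=
  dualL_le fun s hs => by
    simpa using inv_anti₀ (ell_pos hpos hcont hlim le_rfl) (ell_zero_le hpos hcont hs)

theorem dualL_sq_le (hpos : ∀ r ≥ 0, 0 < u r) (hcont : ContinuousOn u (Ici 0))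
    (hlim : Tendsto (fun r => log (u r) / √r) atTop atTop) {θ : ℝ} (h0 : 0 ≤ θ) (h1 : θ ≤ 1) :
    dualL u (θ ^ 2) ≤ dualL u 0 ^ (1 - θ) * dualL u 1 ^ θ :=
  dualL_le fun s hs => by
    have hus := hpos s hs
    have hsplit : exp (2 * √(θ ^ 2 * s)) / u s
        = (exp (2 * √(0 * s)) / u s) ^ (1 - θ) * (exp (2 * √(1 * s)) / u s) ^ θ := by
      rw [zero_mul, one_mul, sqrt_zero, mul_zero, exp_zero, div_rpow zero_le_one hus.le, one_rpow,
        div_rpow (exp_pos _).le hus.le, ← exp_mul, div_mul_div_comm, one_mul, ← rpow_add hus,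
        sub_add_cancel, rpow_one, sqrt_mul (sq_nonneg θ), sqrt_sq h0]
      ring_nf
    rw [hsplit]
    exact mul_le_mul
      (rpow_le_rpow (by positivity) (le_dualL hpos hcont hlim le_rfl hs) (by linarith))
      (rpow_le_rpow (by positivity) (le_dualL hpos hcont hlim zero_le_one hs) h0)
      (by positivity) (rpow_nonneg (dualL_pos hpos hcont hlim le_rfl).le _)

theorem ell_dualL_zero_le (hpos : ∀ r ≥ 0, 0 < u r) (hcont : ContinuousOn u (Ici 0))
    (hlim : Tendsto (fun r => log (u r) / √r) atTop atTop) : ell (dualL u) 0 ≤ (ell u 0)⁻¹ := by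
  have hD0 := dualL_pos hpos hcont hlim le_rfl
  have hD1 := dualL_pos hpos hcont hlim zero_le_one
  have hcont' : Continuous fun θ : ℝ => dualL u 0 ^ (1 - θ) * dualL u 1 ^ θ :=
    (continuous_const.rpow (by fun_prop) fun _ => .inl hD0.ne').mul
      (continuous_const.rpow continuous_id fun _ => .inl hD1.ne')
  have hlim' : Tendsto (fun θ : ℝ => dualL u 0 ^ (1 - θ) * dualL u 1 ^ θ) (𝓝[>] 0)
      (𝓝 (dualL u 0)) := by
    simpa using (hcont'.tendsto 0).mono_left nhdsWithin_le_nhds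
  refine (ge_of_tendsto hlim' ?_).trans (dualL_zero_le hpos hcont hlim)
  filter_upwards [Ioo_mem_nhdsGT one_pos] with θ hθ
  calc ell (dualL u) 0 ≤ dualL u (θ ^ 2) := by
        simpa using ell_le (t := 0) (fun r hr => (dualL_pos hpos hcont hlim hr.le).le)
          (pow_pos hθ.1 2)
    _ ≤ _ := dualL_sq_le hpos hcont hlim hθ.1.le hθ.2.le

theorem dualL_sq_le_exp_neg (hpos : ∀ r ≥ 0, 0 < u r) {a c : ℝ} (ha : 0 ≤ a)
    (h : ∀ s ≥ 0, c + a * √s ≤ log (u s)) : dualL u ((a / 2) ^ 2) ≤ exp (-c) :=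
  dualL_le fun s hs => by
    rw [sqrt_mul (by positivity), sqrt_sq (by positivity), div_le_iff₀ (hpos s hs),
      ← exp_log (hpos s hs), ← exp_add]
    exact exp_le_exp.2 (by linarith [h s hs])

theorem add_mul_sqrt_le_log_of_isMinOn (hpos : ∀ r ≥ 0, 0 < u r)
    (hconv : ConvexOn ℝ (Ici 0) fun x : ℝ => log (u (x ^ 2))) {t r₀ : ℝ} (hr₀ : 0 < r₀)
    (hmin : IsMinOn (fun r => u r / r ^ t) (Ioi 0) r₀) {s : ℝ} (hs : 0 ≤ s) :
    log (u r₀) - 2 * t + 2 * t / √r₀ * √s ≤ log (u s) := by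
  set x₀ := √r₀
  have hx₀ : 0 < x₀ := sqrt_pos.2 hr₀
  have hx₀_sq : x₀ ^ 2 = r₀ := sq_sqrt hr₀.le
  -- the function below is `x ↦ log (u (x ^ 2) / (x ^ 2) ^ t)`
  have hlocmin : IsLocalMinOn (fun x => log (u (x ^ 2)) - 2 * t * log x) (Ici 0) x₀ := by
    refine IsLocalMin.on ?_ _
    filter_upwards [Ioi_mem_nhds hx₀] with x hx
    have hx0 : 0 < x := hx
    have key := log_le_log (by have := hpos r₀ hr₀.le; positivity) (hmin (pow_pos hx0 2))
    simp only at key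
    rw [log_div (hpos _ hr₀.le).ne' (rpow_pos_of_pos hr₀ t).ne',
      log_div (hpos _ (by positivity)).ne' (rpow_pos_of_pos (by positivity) t).ne',
      log_rpow hr₀, log_rpow (by positivity), log_pow, ← hx₀_sq, log_pow] at key
    push_cast at key
    linarith
  have hsub := hconv.add_mul_sub_le_of_isLocalMinOn_sub (mem_Ici.2 hx₀.le)
    (mem_Ici.2 (sqrt_nonneg s)) ((hasDerivAt_log hx₀.ne').const_mul (2 * t)) hlocmin
  rw [sq_sqrt hs, hx₀_sq] at hsub
  have e : 2 * t * x₀⁻¹ * (√s - x₀) = 2 * t / x₀ * √s - 2 * t := by field_simp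
  linarith

theorem ell_dualL_le_of_pos (hpos : ∀ r ≥ 0, 0 < u r) (hcont : ContinuousOn u (Ici 0))
    (hlim : Tendsto (fun r => log (u r) / √r) atTop atTop)
    (hconv : ConvexOn ℝ (Ici 0) fun x : ℝ => log (u (x ^ 2))) {t : ℝ} (ht : 0 < t) :
    ell (dualL u) t ≤ exp (2 * t) / (ell u t * t ^ (2 * t)) := by
  obtain ⟨r₀, hr₀, hmin⟩ := exists_isMinOn_div_rpow hpos hcont hlim ht
  have hell : ell u t = u r₀ / r₀ ^ t :=
    le_antisymm (ell_le (fun r hr => (hpos r hr.le).le) hr₀) (le_ell fun r hr => hmin hr)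
  have hdual := dualL_sq_le_exp_neg hpos (by positivity)
    fun s hs => add_mul_sqrt_le_log_of_isMinOn hpos hconv hr₀ hmin hs
  have hr : (2 * t / √r₀ / 2) ^ 2 = t ^ 2 / r₀ := by
    rw [div_right_comm, mul_div_cancel_left₀ _ two_ne_zero, div_pow, sq_sqrt hr₀.le]
  have hrt : (t ^ 2 / r₀) ^ t = t ^ (2 * t) / r₀ ^ t := by
    rw [div_rpow (by positivity) hr₀.le, ← rpow_natCast, ← rpow_mul ht.le, Nat.cast_ofNat]
  rw [hr] at hdual
  calc ell (dualL u) t ≤ dualL u (t ^ 2 / r₀) / (t ^ 2 / r₀) ^ t :=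
        ell_le (fun r hr => (dualL_pos hpos hcont hlim hr.le).le) (by positivity)
    _ ≤ exp (-(log (u r₀) - 2 * t)) / (t ^ 2 / r₀) ^ t := by gcongr
    _ = exp (2 * t) / (ell u t * t ^ (2 * t)) := by
      have hu₀ := hpos r₀ hr₀.le
      have := self_rpow_two_mul_pos ht.le
      have := rpow_pos_of_pos hr₀ t
      rw [hell, hrt, neg_sub, exp_sub, exp_log hu₀]
      field_simp

end

theorem legendre_of_dual_legendre (u : ℝ → ℝ)
    (hpos : ∀ r ≥ 0, 0 < u r)
    (hcont : ContinuousOn u (Set.Ici 0))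
    (hlim : Filter.Tendsto (fun r => Real.log (u r) / Real.sqrt r)
      Filter.atTop Filter.atTop)
    (hconv : ConvexOn ℝ (Set.Ici 0) (fun x : ℝ => Real.log (u (x ^ 2)))) :
    ∀ t ≥ (0 : ℝ),
      ell (dualL u) t = Real.exp (2 * t) / (ell u t * t ^ (2 * t)) := by
  intro t ht
  refine le_antisymm ?_ (div_ell_le_ell_dualL hpos hcont hlim ht)
  rcases ht.eq_or_lt with rfl | ht
  · simpa using ell_dualL_zero_le hpos hcont hlim
  · exact ell_dualL_le_of_pos hpos hcont hlim hconv ht
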